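/- For a δ-Jordan Lie supertriple system T, the supercommutator of any two elements of the quasicentroid is a quasiderivation: if D₁, D₂ ∈ QC(T), then [[D₁,D₂](a),b,c] + (-1)^{|a|(|D₁|+|D₂|)}[a,[D₁,D₂](b),c] + (-1)^{(|a|+|b|)(|D₁|+|D₂|)}[a,b,[D₁,D₂](c)] = 0 for all a,b,c ∈ T; hence [QC(T), QC(T)] ⊆ QDer(T) (with D' = 0). -/

import Mathlib

/-- The sign `(-1)^{ij}` for degrees `i, j ∈ ℤ/2`, valued in the field `k`. -/
def sgn (k : Type) [Field k] (i j : ZMod 2) : k := (-1 : k) ^ (i.val * j.val)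

/-- A `δ`-Jordan Lie supertriple system: a `ℤ/2`-graded vector space `M` over `k`
with a trilinear product satisfying the four graded axioms. -/
structure DJLSTS (k : Type) [Field k] (M : Type) [AddCommGroup M] [Module k M] (δ : k) where
  grade : ZMod 2 → Submodule k M
  direct : DirectSum.IsInternal grade
  br : M →ₗ[k] M →ₗ[k] M →ₗ[k] M
  delta_pm : δ = 1 ∨ δ = -1
  grade_br : ∀ {i j l : ZMod 2} {a b c : M},
      a ∈ grade i → b ∈ grade j → c ∈ grade l → br a b c ∈ grade (i + j + l)
  skew : ∀ {i j : ZMod 2} {a b : M}, a ∈ grade i → b ∈ grade j → ∀ c : M,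
      br b a c = -((δ * sgn k i j) • br a b c)
  cyclic : ∀ {i j l : ZMod 2} {a b c : M},
      a ∈ grade i → b ∈ grade j → c ∈ grade l →
      sgn k i l • br a b c + sgn k j i • br b c a + sgn k l j • br c a b = 0
  fund : ∀ {i j l m : ZMod 2} {a b c d : M},
      a ∈ grade i → b ∈ grade j → c ∈ grade l → d ∈ grade m → ∀ e : M,
      br a b (br c d e) = br (br a b c) d e + sgn k l (i + j) • br c (br a b d) e
        + (δ * sgn k (i + j) (l + m)) • br c d (br a b e)

/-- A `δ`-Jordan Lie superalgebra. -/
structure DJLSA (k : Type) [Field k] (M : Type) [AddCommGroup M] [Module k M] (δ : k) where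
  grade : ZMod 2 → Submodule k M
  direct : DirectSum.IsInternal grade
  br2 : M →ₗ[k] M →ₗ[k] M
  delta_pm : δ = 1 ∨ δ = -1
  grade_br2 : ∀ {i j : ZMod 2} {a b : M},
      a ∈ grade i → b ∈ grade j → br2 a b ∈ grade (i + j)
  skew2 : ∀ {i j : ZMod 2} {a b : M}, a ∈ grade i → b ∈ grade j →
      br2 b a = -((δ * sgn k i j) • br2 a b)
  jacobi : ∀ {i j l : ZMod 2} {a b c : M},
      a ∈ grade i → b ∈ grade j → c ∈ grade l →
      (δ * sgn k i l) • br2 (br2 a b) c + (δ * sgn k j i) • br2 (br2 b c) a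
        + (δ * sgn k l j) • br2 (br2 c a) b = 0

/-- An (ungraded) `δ`-Jordan Lie triple system. -/
structure DJLTS (k : Type) [Field k] (W : Type) [AddCommGroup W] [Module k W] (δ : k) where
  br : W →ₗ[k] W →ₗ[k] W →ₗ[k] W
  delta_pm : δ = 1 ∨ δ = -1
  skew : ∀ a b c : W, br b a c = -(δ • br a b c)
  cyclic : ∀ a b c : W, br a b c + br b c a + br c a b = 0
  fund : ∀ a b c d e : W,
      br a b (br c d e) = br (br a b c) d e + br c (br a b d) e + δ • br c d (br a b e)

variable {k : Type} [Field k] {M : Type} [AddCommGroup M] [Module k M] {δ : k}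
variable {W : Type} [AddCommGroup W] [Module k W]

/-- `D` is homogeneous of degree `s` with respect to the grading of `S`. -/
def IsHomog (S : DJLSTS k M δ) (s : ZMod 2) (D : M →ₗ[k] M) : Prop :=
  ∀ (i : ZMod 2) (a : M), a ∈ S.grade i → D a ∈ S.grade (s + i)

/-- Supercommutator `[D₁,D₂] = D₁D₂ - (-1)^{|D₁||D₂|} D₂D₁` of homogeneous operators
of degrees `s₁`, `s₂`. -/
def scomm (s₁ s₂ : ZMod 2) (D₁ D₂ : M →ₗ[k] M) : M →ₗ[k] M :=
  D₁ ∘ₗ D₂ - sgn k s₁ s₂ • (D₂ ∘ₗ D₁)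

/-- Homogeneous `n`-derivation of degree `s`. -/
def IsDer (S : DJLSTS k M δ) (n : ℕ) (s : ZMod 2) (D : M →ₗ[k] M) : Prop :=
  IsHomog S s D ∧ ∀ {i j : ZMod 2} {a b : M}, a ∈ S.grade i → b ∈ S.grade j → ∀ c : M,
    δ ^ n • S.br (D a) b c + (δ ^ n * sgn k s i) • S.br a (D b) c
      + (δ ^ n * sgn k s (i + j)) • S.br a b (D c) = D (S.br a b c)

/-- Homogeneous generalized `n`-derivation of degree `s`, with associated maps `D' D'' D'''`. -/
def IsGenDer (S : DJLSTS k M δ) (n : ℕ) (s : ZMod 2) (D D' D'' D''' : M →ₗ[k] M) : Prop :=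
  IsHomog S s D ∧ IsHomog S s D' ∧ IsHomog S s D'' ∧ IsHomog S s D''' ∧
  ∀ {i j : ZMod 2} {a b : M}, a ∈ S.grade i → b ∈ S.grade j → ∀ c : M,
    δ ^ n • S.br (D a) b c + (δ ^ n * sgn k s i) • S.br a (D' b) c
      + (δ ^ n * sgn k s (i + j)) • S.br a b (D'' c) = D''' (S.br a b c)

/-- Membership in the `n`-centroid, for `D` homogeneous of degree `s`. -/
def IsCentroid (S : DJLSTS k M δ) (n : ℕ) (s : ZMod 2) (D : M →ₗ[k] M) : Prop :=
  IsHomog S s D ∧ ∀ {i j : ZMod 2} {a b : M}, a ∈ S.grade i → b ∈ S.grade j → ∀ c : M,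
    δ ^ n • S.br (D a) b c = D (S.br a b c) ∧
    (δ ^ n * sgn k s i) • S.br a (D b) c = D (S.br a b c) ∧
    (δ ^ n * sgn k s (i + j)) • S.br a b (D c) = D (S.br a b c)

/-- Membership in the quasicentroid, for `D` homogeneous of degree `s`. -/
def IsQC (S : DJLSTS k M δ) (s : ZMod 2) (D : M →ₗ[k] M) : Prop :=
  IsHomog S s D ∧ ∀ a b c : M, D (S.br a b c) = S.br (D a) b c

/-- Central derivation. -/
def IsZDer (S : DJLSTS k M δ) (D : M →ₗ[k] M) : Prop :=
  ∀ a b c : M, D (S.br a b c) = 0 ∧ S.br (D a) b c = 0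

/-- The operator `D(a,b) = (-1)^{|a||b|}θ(b,a) - δθ(a,b)` attached to a bilinear map `θ`,
where `i, j` are the degrees of `a, b`. -/
def Dop (δ : k) (θ : M →ₗ[k] M →ₗ[k] W →ₗ[k] W) (i j : ZMod 2) (a b : M) : W →ₗ[k] W :=
  sgn k i j • θ b a - δ • θ a b

/-- A representation of a `δ`-Jordan Lie supertriple system `S` on a
`ℤ/2`-graded vector space `V`. -/
structure DJRep (S : DJLSTS k M δ) (V : Type) [AddCommGroup V] [Module k V] where
  Vgrade : ZMod 2 → Submodule k V
  Vdirect : DirectSum.IsInternal Vgrade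
  θ : M →ₗ[k] M →ₗ[k] V →ₗ[k] V
  θ_grade : ∀ {i j n : ZMod 2} {a b : M} {v : V},
      a ∈ S.grade i → b ∈ S.grade j → v ∈ Vgrade n → θ a b v ∈ Vgrade (i + j + n)
  rep1 : ∀ {i j l m : ZMod 2} {a b c d : M},
      a ∈ S.grade i → b ∈ S.grade j → c ∈ S.grade l → d ∈ S.grade m → ∀ v : V,
      sgn k (i + j) (l + m) • θ c d (θ a b v)
        - (δ * sgn k i j * sgn k m (l + i)) • θ b d (θ a c v)
        - θ a (S.br b c d) v + sgn k i (j + l) • Dop δ θ j l b c (θ a d v) = 0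
  rep2 : ∀ {i j l m : ZMod 2} {a b c d : M},
      a ∈ S.grade i → b ∈ S.grade j → c ∈ S.grade l → d ∈ S.grade m → ∀ v : V,
      (δ * sgn k (i + j) (l + m)) • θ c d (Dop δ θ i j a b v)
        - δ • Dop δ θ i j a b (θ c d v)
        + θ (S.br a b c) d v + (δ * sgn k l (i + j)) • θ c (S.br a b d) v = 0
  rep3 : ∀ {i j l m : ZMod 2} {a b c d : M},
      a ∈ S.grade i → b ∈ S.grade j → c ∈ S.grade l → d ∈ S.grade m → ∀ v : V,
      Dop δ θ (i + j + l) m (S.br a b c) d v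
        + sgn k l (i + j) • Dop δ θ l (i + j + m) c (S.br a b d) v
        - δ • Dop δ θ i j a b (Dop δ θ l m c d v)
        + sgn k (i + j) (l + m) • Dop δ θ l m c d (Dop δ θ i j a b v) = 0

/-- The coboundary `d¹` of a `1`-cochain `f` of degree `s`, as a function of the degrees
`i j l` and the (homogeneous) arguments. -/
def d1 (S : DJLSTS k M δ) (R : DJRep S W) (s : ZMod 2) (f : M →ₗ[k] W) :
    ZMod 2 → ZMod 2 → ZMod 2 → M → M → M → W := fun i j l x₁ x₂ x₃ =>
  sgn k (s + i) (j + l) • R.θ x₂ x₃ (f x₁) - f (S.br x₁ x₂ x₃)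
    + (δ * sgn k s (i + j)) • Dop δ R.θ i j x₁ x₂ (f x₃)
    - (δ * sgn k j l * sgn k s (i + l)) • R.θ x₁ x₃ (f x₂)

/-- The coboundary `d³` of a `3`-cochain `g` of degree `s` (given together with the
degrees of its arguments), as a function of the degrees and the (homogeneous) arguments. -/
def d3 (S : DJLSTS k M δ) (R : DJRep S W) (s : ZMod 2)
    (g : ZMod 2 → ZMod 2 → ZMod 2 → M → M → M → W) :
    ZMod 2 → ZMod 2 → ZMod 2 → ZMod 2 → ZMod 2 → M → M → M → M → M → W :=
  fun i₁ i₂ i₃ i₄ i₅ x₁ x₂ x₃ x₄ x₅ =>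
    sgn k (s + i₁ + i₂ + i₃) (i₄ + i₅) • R.θ x₄ x₅ (g i₁ i₂ i₃ x₁ x₂ x₃)
    - (δ * sgn k (s + i₁ + i₂) (i₃ + i₅) * sgn k i₄ i₅) • R.θ x₃ x₅ (g i₁ i₂ i₄ x₁ x₂ x₄)
    - (δ * sgn k s (i₁ + i₂)) • Dop δ R.θ i₁ i₂ x₁ x₂ (g i₃ i₄ i₅ x₃ x₄ x₅)
    + sgn k (s + i₁ + i₂) (i₃ + i₄) • Dop δ R.θ i₃ i₄ x₃ x₄ (g i₁ i₂ i₅ x₁ x₂ x₅)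
    + g (i₁ + i₂ + i₃) i₄ i₅ (S.br x₁ x₂ x₃) x₄ x₅
    - g i₁ i₂ (i₃ + i₄ + i₅) x₁ x₂ (S.br x₃ x₄ x₅)
    + sgn k i₃ (i₁ + i₂) • g i₃ (i₁ + i₂ + i₄) i₅ x₃ (S.br x₁ x₂ x₄) x₅
    + (δ * sgn k (i₁ + i₂) (i₃ + i₄)) • g i₃ i₄ (i₁ + i₂ + i₅) x₃ x₄ (S.br x₁ x₂ x₅)

/-- An even trilinear map `ψ` is a `3`-cocycle of `S` (with respect to the adjoint
representation): `d³ψ = 0`, written out explicitly. -/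
def IsCocycle3 (S : DJLSTS k M δ) (ψ : M →ₗ[k] M →ₗ[k] M →ₗ[k] M) : Prop :=
  ∀ {i₁ i₂ i₃ i₄ : ZMod 2} {x₁ x₂ x₃ x₄ : M},
    x₁ ∈ S.grade i₁ → x₂ ∈ S.grade i₂ → x₃ ∈ S.grade i₃ → x₄ ∈ S.grade i₄ → ∀ x₅ : M,
    S.br x₁ x₂ (ψ x₃ x₄ x₅) + ψ x₁ x₂ (S.br x₃ x₄ x₅)
      = S.br (ψ x₁ x₂ x₃) x₄ x₅ + ψ (S.br x₁ x₂ x₃) x₄ x₅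
        + sgn k i₃ (i₁ + i₂) • (S.br x₃ (ψ x₁ x₂ x₄) x₅ + ψ x₃ (S.br x₁ x₂ x₄) x₅)
        + (δ * sgn k (i₁ + i₂) (i₃ + i₄))
            • (S.br x₃ x₄ (ψ x₁ x₂ x₅) + ψ x₃ x₄ (S.br x₁ x₂ x₅))

/-- A 1-parameter formal deformation `f_t = ∑ fᵢ tⁱ` of `S`, recorded by its sequence of
coefficients, satisfying equations (4.5)–(4.8). -/
def IsDeformation (S : DJLSTS k M δ) (F : ℕ → (M →ₗ[k] M →ₗ[k] M →ₗ[k] M)) : Prop :=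
  F 0 = S.br ∧
  (∀ (p : ℕ) {i j l : ZMod 2} {a b c : M},
      a ∈ S.grade i → b ∈ S.grade j → c ∈ S.grade l → F p a b c ∈ S.grade (i + j + l)) ∧
  (∀ (p : ℕ) {i j : ZMod 2} {a b : M}, a ∈ S.grade i → b ∈ S.grade j → ∀ c : M,
      F p b a c = -((δ * sgn k i j) • F p a b c)) ∧
  (∀ (p : ℕ) {i j l : ZMod 2} {a b c : M},
      a ∈ S.grade i → b ∈ S.grade j → c ∈ S.grade l →
      sgn k i l • F p a b c + sgn k j i • F p b c a + sgn k l j • F p c a b = 0) ∧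
  (∀ (n : ℕ) {i j l m : ZMod 2} {a b c d : M},
      a ∈ S.grade i → b ∈ S.grade j → c ∈ S.grade l → d ∈ S.grade m → ∀ e : M,
      ∑ p ∈ Finset.range (n + 1), F p a b (F (n - p) c d e)
        = ∑ p ∈ Finset.range (n + 1),
            (F p (F (n - p) a b c) d e
              + sgn k l (i + j) • F p c (F (n - p) a b d) e
              + (δ * sgn k (i + j) (l + m)) • F p c d (F (n - p) a b e)))

/-- Equivalence of two formal deformations via a formal isomorphism
`φ_t = ∑ φᵢ tⁱ` with `φ₀ = id`: `φ_t ∘ f_t = f'_t ∘ (φ_t × φ_t × φ_t)` coefficientwise. -/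
def DefEquiv (S : DJLSTS k M δ) (F F' : ℕ → (M →ₗ[k] M →ₗ[k] M →ₗ[k] M))
    (φ : ℕ → (M →ₗ[k] M)) : Prop :=
  φ 0 = LinearMap.id ∧
  ∀ (n : ℕ) (x₁ x₂ x₃ : M),
    ∑ p ∈ Finset.range (n + 1), φ p (F (n - p) x₁ x₂ x₃)
      = ∑ q ∈ Finset.Nat.antidiagonalTuple 4 n,
          F' (q 0) (φ (q 1) x₁) (φ (q 2) x₂) (φ (q 3) x₃)

/-- Nijenhuis operator on a `δ`-Jordan Lie supertriple system. -/
def IsNijenhuis (S : DJLSTS k M δ) (N : M →ₗ[k] M) : Prop :=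
  (∀ x₁ x₂ x₃ : M, S.br (N x₁) (N x₂) (N x₃) = 0) ∧
  (∀ x₁ x₂ x₃ : M,
    N (N (S.br x₁ x₂ x₃))
      = N (S.br (N x₁) x₂ x₃) + N (S.br x₁ (N x₂) x₃) + N (S.br x₁ x₂ (N x₃))
        - S.br (N x₁) (N x₂) x₃ - S.br x₁ (N x₂) (N x₃) - S.br (N x₁) x₂ (N x₃))

/-! Skew-symmetry lets an element `D` of degree `s` of the quasicentroid pass to the middle slot
with a sign: `[a, D b, c] = (-1)^{|a| s} D [a, b, c]`. Computing `[D₂ a, D₁ b, c]` in two ways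
then shows that `D₁ D₂` and `(-1)^{s₁ s₂} D₂ D₁` agree on triple products, so the supercommutator
`E = [D₁, D₂]`, which again lies in the quasicentroid, annihilates every triple product. Hence
`[E a, b, c] = E [a, b, c] = 0`, similarly in the middle slot, and the cyclic identity applied to
`a, b, E c` gives `[a, b, E c] = 0`. -/

section Sign

variable (k : Type) [Field k]

lemma sgn_comm (i j : ZMod 2) : sgn k i j = sgn k j i := by
  rw [sgn, sgn, mul_comm]

lemma sgn_mul_self (i j : ZMod 2) : sgn k i j * sgn k i j = 1 := by
  rw [sgn, ← mul_pow, neg_one_mul, neg_neg, one_pow]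

lemma sgn_ne_zero (i j : ZMod 2) : sgn k i j ≠ 0 :=
  left_ne_zero_of_mul_eq_one (sgn_mul_self k i j)

lemma sgn_add_left (i j l : ZMod 2) : sgn k (i + j) l = sgn k i l * sgn k j l := by
  rw [sgn, sgn, sgn, ← pow_add, ← add_mul, ZMod.val_add, neg_one_pow_eq_pow_mod_two,
    Nat.mod_mul_mod, ← neg_one_pow_eq_pow_mod_two]

end Sign

lemma DJLSTS.delta_mul_self (S : DJLSTS k M δ) : δ * δ = 1 := by
  rcases S.delta_pm with rfl | rfl <;> norm_num

section Homogeneous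

variable {S : DJLSTS k M δ} {s s₁ s₂ : ZMod 2} {D D₁ D₂ : M →ₗ[k] M}

lemma IsHomog.comp (h₁ : IsHomog S s₁ D₁) (h₂ : IsHomog S s₂ D₂) :
    IsHomog S (s₁ + s₂) (D₁ ∘ₗ D₂) := fun i a ha => by
  simpa only [add_assoc, LinearMap.comp_apply] using h₁ _ _ (h₂ i a ha)

lemma IsHomog.sub (h₁ : IsHomog S s D₁) (h₂ : IsHomog S s D₂) : IsHomog S s (D₁ - D₂) :=
  fun i a ha => (S.grade _).sub_mem (h₁ i a ha) (h₂ i a ha)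

lemma IsHomog.smul (h : IsHomog S s D) (r : k) : IsHomog S s (r • D) :=
  fun i a ha => (S.grade _).smul_mem r (h i a ha)

end Homogeneous

namespace IsQC

variable {S : DJLSTS k M δ} {s s₁ s₂ : ZMod 2} {D D₁ D₂ : M →ₗ[k] M}

lemma br_middle (h : IsQC S s D) {i j : ZMod 2} {a b : M} (ha : a ∈ S.grade i)
    (hb : b ∈ S.grade j) (c : M) : S.br a (D b) c = sgn k i s • D (S.br a b c) := by
  rw [S.skew (h.1 j b hb) ha, ← h.2, S.skew ha hb, map_neg, map_smul, smul_neg, neg_neg,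
    smul_smul, sgn_add_left, sgn_comm k s i, sgn_comm k j i]
  congr 1
  linear_combination (sgn k i s * sgn k i j ^ 2) * S.delta_mul_self + sgn k i s * sgn_mul_self k i j

lemma apply_apply_br (h₁ : IsQC S s₁ D₁) (h₂ : IsQC S s₂ D₂) {i j : ZMod 2} {a b : M}
    (ha : a ∈ S.grade i) (hb : b ∈ S.grade j) (c : M) :
    D₁ (D₂ (S.br a b c)) = sgn k s₁ s₂ • D₂ (D₁ (S.br a b c)) := by
  have hD₁_first : S.br (D₂ a) (D₁ b) c = sgn k (s₂ + i) s₁ • D₁ (D₂ (S.br a b c)) := by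
    rw [h₁.br_middle (h₂.1 i a ha) hb, ← h₂.2]
  have hD₂_first : S.br (D₂ a) (D₁ b) c = sgn k i s₁ • D₂ (D₁ (S.br a b c)) := by
    rw [← h₂.2, h₁.br_middle ha hb, map_smul]
  calc D₁ (D₂ (S.br a b c))
      = sgn k (s₂ + i) s₁ • sgn k (s₂ + i) s₁ • D₁ (D₂ (S.br a b c)) := by
        rw [smul_smul, sgn_mul_self, one_smul]
    _ = sgn k s₁ s₂ • D₂ (D₁ (S.br a b c)) := by
        rw [← hD₁_first, hD₂_first, smul_smul, sgn_add_left, sgn_comm k s₂ s₁]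
        congr 1
        linear_combination sgn k s₁ s₂ * sgn_mul_self k i s₁

lemma br_eq_zero_of_apply_br_eq_zero (h : IsQC S s D)
    (hD : ∀ {i j : ZMod 2} {a b : M}, a ∈ S.grade i → b ∈ S.grade j → ∀ c, D (S.br a b c) = 0)
    {i j l : ZMod 2} {a b c : M} (ha : a ∈ S.grade i) (hb : b ∈ S.grade j)
    (hc : c ∈ S.grade l) :
    S.br (D a) b c = 0 ∧ S.br a (D b) c = 0 ∧ S.br a b (D c) = 0 := by
  refine ⟨by rw [← h.2, hD ha hb], by rw [h.br_middle ha hb, hD ha hb, smul_zero], ?_⟩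
  have hcyc := S.cyclic ha hb (h.1 l c hc)
  rw [h.br_middle hb hc, hD hb hc, ← h.2, hD hc ha] at hcyc
  simp only [smul_zero, add_zero, smul_eq_zero] at hcyc
  exact hcyc.resolve_left (sgn_ne_zero k _ _)

lemma scomm_apply_br (h₁ : IsQC S s₁ D₁) (h₂ : IsQC S s₂ D₂) {i j : ZMod 2} {a b : M}
    (ha : a ∈ S.grade i) (hb : b ∈ S.grade j) (c : M) :
    scomm s₁ s₂ D₁ D₂ (S.br a b c) = 0 := by
  simp [scomm, h₁.apply_apply_br h₂ ha hb]

lemma scomm (h₁ : IsQC S s₁ D₁) (h₂ : IsQC S s₂ D₂) :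
    IsQC S (s₁ + s₂) (scomm s₁ s₂ D₁ D₂) := by
  refine ⟨(h₁.1.comp h₂.1).sub ?_, fun a b c => ?_⟩
  · exact add_comm s₁ s₂ ▸ (h₂.1.comp h₁.1).smul _
  · simp [_root_.scomm, h₁.2, h₂.2]

end IsQC

/-- for `D₁, D₂` in the quasicentroid,
`[[D₁,D₂]a,b,c] + (-1)^{|a|(|D₁|+|D₂|)}[a,[D₁,D₂]b,c]
 + (-1)^{(|a|+|b|)(|D₁|+|D₂|)}[a,b,[D₁,D₂]c] = 0`. -/
theorem stmt6 (S : DJLSTS k M δ) {s₁ s₂ : ZMod 2} {D₁ D₂ : M →ₗ[k] M}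
    (h₁ : IsQC S s₁ D₁) (h₂ : IsQC S s₂ D₂) :
    ∀ {i j l : ZMod 2} {a b c : M},
      a ∈ S.grade i → b ∈ S.grade j → c ∈ S.grade l →
      S.br (scomm s₁ s₂ D₁ D₂ a) b c
        + sgn k i (s₁ + s₂) • S.br a (scomm s₁ s₂ D₁ D₂ b) c
        + sgn k (i + j) (s₁ + s₂) • S.br a b (scomm s₁ s₂ D₁ D₂ c) = 0 := by
  intro i j l a b c ha hb hc
  obtain ⟨hleft, hmiddle, hright⟩ := (h₁.scomm h₂).br_eq_zero_of_apply_br_eq_zero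
    (h₁.scomm_apply_br h₂) ha hb hc
  rw [hleft, hmiddle, hright, smul_zero, smul_zero, add_zero, add_zero]
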